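/- Let n ≥ 3 and 2 ≤ k ≤ n with 2k ≥ n. Let Λ = (λ_1,…,λ_n) ∈ ℝ^n and suppose that A_Λ ∈ Γ̄_k^+. Then min_{1 ≤ i ≤ n} λ_i ≥ ((2k−n)(n−1)/((n−2)(k−1))) · C(n,k)^{−1/k} · σ_k(A_Λ)^{1/k}, where C(n,k) is the binomial coefficient. -/

import Mathlib

/-- The `k`-th elementary symmetric polynomial of `x : Fin n → ℝ`. -/
noncomputable def sigmaElem (n k : ℕ) (x : Fin n → ℝ) : ℝ :=
  ∑ s ∈ Finset.univ.powersetCard k, ∏ i ∈ s, x i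

/-- The Gårding cone `Γ_k^+ ⊆ ℝ^n`: the connected component of
`{σ_k > 0}` containing `(1, …, 1)`. -/
def GammaPlus (n k : ℕ) : Set (Fin n → ℝ) :=
  connectedComponentIn {x | 0 < sigmaElem n k x} (fun _ => 1)

/-- `A_Λ = Λ − (Σ_i λ_i / (2(n−1))) · (1,…,1)`. -/
noncomputable def ALam (n : ℕ) (Λ : Fin n → ℝ) : Fin n → ℝ :=
  fun i => Λ i - (∑ j, Λ j) / (2 * ((n : ℝ) - 1))

/-!
On the Gårding cone every `σ_j` with `j ≤ k` is positive: `Γ_k` is connected, and the set where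
`σ_1, …, σ_k > 0` is open and relatively closed in `{σ_k > 0}`. For the means `E_j = σ_j / C(m, j)`
of a real multiset of size `m`, Newton's inequality `E_j E_{j+2} ≤ E_{j+1}²` goes by induction on
`m`: differentiating `∏ (X + λ_i)` keeps all roots real (Rolle) and the means unchanged, and the
extremal case `j + 2 = m` is Cauchy–Schwarz for the cofactors `∏_{l ≠ i} λ_l`. Newton gives
Maclaurin's inequality `σ_k ≤ C(n, k) (σ_1 / n)^k`, and, since deleting `λ_i` from a point of
`Γ_k` lands in `Γ_{k-1}`, also `λ_i ≥ -(n - k) σ_1 / (n (k - 1))`. For `x = A_Λ` one has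
`x_i + σ_1(x) / (n - 2) = Λ_i`; as `2k ≥ n` makes the constant nonnegative, the two bounds combine
to the claim on `Γ_k`, and it passes to the closure because it is a closed condition.
-/

open Polynomial

theorem Nat.choose_mul_choose_add_two_le_sq (n j : ℕ) :
    n.choose j * n.choose (j + 2) ≤ n.choose (j + 1) ^ 2 := by
  have h1 := Nat.choose_succ_right_eq n j
  have h2 := Nat.choose_succ_right_eq n (j + 1)
  rcases lt_or_ge n (j + 1) with h | h
  · simp [Nat.choose_eq_zero_of_lt (by omega : n < j + 2)]
  refine Nat.le_of_mul_le_mul_right (c := (n - j) * (j + 2)) ?_ (Nat.mul_pos (by omega) (by omega))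
  calc n.choose j * n.choose (j + 2) * ((n - j) * (j + 2))
      = n.choose j * (n - j) * (n.choose (j + 2) * (j + 2)) := by ring
    _ = n.choose (j + 1) ^ 2 * ((j + 1) * (n - (j + 1))) := by rw [← h1, h2]; ring
    _ ≤ n.choose (j + 1) ^ 2 * ((n - j) * (j + 2)) :=
        Nat.mul_le_mul_left _ (mul_comm (n - j) (j + 2) ▸ Nat.mul_le_mul (by omega) (by omega))

theorem Real.rpow_neg_inv_mul_rpow_inv_le {a c b : ℝ} {k : ℕ} (hk : k ≠ 0) (ha : 0 ≤ a)
    (hc : 0 < c) (hb : 0 ≤ b) (h : a ≤ c * b ^ k) :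
    c ^ (-(1 / (k : ℝ))) * a ^ (1 / (k : ℝ)) ≤ b := by
  have hroot : a ^ (1 / (k : ℝ)) ≤ c ^ (1 / (k : ℝ)) * b := by
    calc a ^ (1 / (k : ℝ)) ≤ (c * b ^ k) ^ (1 / (k : ℝ)) := by gcongr
      _ = c ^ (1 / (k : ℝ)) * b := by
        rw [Real.mul_rpow hc.le (by positivity), one_div, Real.pow_rpow_inv_natCast hb hk]
  calc c ^ (-(1 / (k : ℝ))) * a ^ (1 / (k : ℝ))
      ≤ c ^ (-(1 / (k : ℝ))) * (c ^ (1 / (k : ℝ)) * b) := by gcongr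
    _ = b := by rw [← mul_assoc, ← Real.rpow_add hc, neg_add_cancel, Real.rpow_zero, one_mul]

namespace Multiset

section CommSemiring

variable {R : Type*} [CommSemiring R]

@[simp] theorem esymm_zero_right (s : Multiset R) : s.esymm 0 = 1 := by simp [esymm]

theorem esymm_eq_zero_of_card_lt {s : Multiset R} {j : ℕ} (h : card s < j) : s.esymm j = 0 := by
  simp [esymm, powersetCard_eq_empty _ h]

theorem le_card_of_esymm_ne_zero {s : Multiset R} {j : ℕ} (h : s.esymm j ≠ 0) : j ≤ card s := by
  by_contra! hj
  exact h (esymm_eq_zero_of_card_lt hj)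

theorem esymm_cons_succ (a : R) (s : Multiset R) (j : ℕ) :
    (a ::ₘ s).esymm (j + 1) = s.esymm (j + 1) + a * s.esymm j := by
  simp [esymm, powersetCard_cons, map_map, sum_map_mul_left]

@[simp] theorem esymm_one_right (s : Multiset R) : s.esymm 1 = s.sum := by
  simp [esymm, powersetCard_one, map_map]

theorem esymm_card (s : Multiset R) : s.esymm (card s) = s.prod := by
  simp [esymm, powersetCard_self]

theorem esymm_map_mul_left (a : R) (s : Multiset R) (j : ℕ) :
    (s.map (a * ·)).esymm j = a ^ j * s.esymm j := by
  simpa using (pow_smul_esymm a j s).symm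

theorem sq_sum_eq (s : Multiset R) : s.sum ^ 2 = (s.map (· ^ 2)).sum + 2 * s.esymm 2 := by
  induction s using Multiset.induction with
  | empty => simp [esymm_eq_zero_of_card_lt (show card (0 : Multiset R) < 2 by simp)]
  | cons a s ih =>
    rw [esymm_cons_succ, esymm_one_right, sum_cons, map_cons, sum_cons, add_sq, ih]
    ring

variable [DecidableEq R]

def cofactors (s : Multiset R) : Multiset R := s.map fun a => (s.erase a).prod

@[simp] theorem card_cofactors (s : Multiset R) : card (cofactors s) = card s := card_map _ _

theorem cofactors_cons (a : R) (s : Multiset R) :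
    cofactors (a ::ₘ s) = s.prod ::ₘ (cofactors s).map (a * ·) := by
  rw [cofactors, map_cons, erase_cons_head, cofactors, map_map]
  congr 1
  refine map_congr rfl fun b hb => ?_
  by_cases hba : b = a
  · subst hba; simp [prod_erase hb]
  · simp [erase_cons_tail_of_mem hb]

theorem sum_cofactors_cons (a : R) (s : Multiset R) :
    (cofactors (a ::ₘ s)).sum = (a ::ₘ s).esymm (card s) := by
  induction s using Multiset.induction generalizing a with
  | empty => simp [cofactors]
  | cons b s ih =>
    rw [cofactors_cons, sum_cons, sum_map_mul_left, map_id', ih, card_cons, esymm_cons_succ,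
      ← card_cons b, esymm_card]

theorem esymm_two_cofactors_cons_cons (a b : R) (s : Multiset R) :
    (cofactors (a ::ₘ b ::ₘ s)).esymm 2 =
      (a ::ₘ b ::ₘ s).prod * (a ::ₘ b ::ₘ s).esymm (card s) := by
  induction s using Multiset.induction generalizing a b with
  | empty => simp [cofactors]
  | cons c s ih =>
    rw [cofactors_cons, esymm_cons_succ, esymm_map_mul_left, ih, esymm_one_right,
      sum_map_mul_left, map_id', sum_cofactors_cons, card_cons, esymm_cons_succ (a := a)]
    simp only [prod_cons]
    ring

end CommSemiring

theorem esymm_pos_of_forall_pos {s : Multiset ℝ} (hs : ∀ a ∈ s, 0 < a) {j : ℕ}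
    (hj : j ≤ card s) : 0 < s.esymm j := by
  have hne : powersetCard j s ≠ 0 := by
    simpa [← card_pos, card_powersetCard] using Nat.choose_pos hj
  simpa [esymm] using sum_lt_sum_of_nonempty (f := fun _ => (0 : ℝ)) (g := prod) hne fun t ht =>
    prod_pos fun a ha => hs a (mem_of_le (mem_powersetCard.1 ht).1 ha)

theorem sq_sum_le_card_mul_sum_sq (s : Multiset ℝ) :
    s.sum ^ 2 ≤ card s * (s.map (· ^ 2)).sum := by
  classical
  have hsum (f : ℝ → ℝ) : ∑ p ∈ s.toEnumFinset, f p.1 = (s.map f).sum := by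
    conv_rhs => rw [← map_toEnumFinset_fst s, map_map]
    rfl
  have := _root_.sq_sum_le_card_mul_sum_sq (s := s.toEnumFinset) (f := Prod.fst)
  rwa [hsum (fun x => x), hsum (· ^ 2), card_toEnumFinset, map_id'] at this

theorem two_mul_card_mul_esymm_two_le (s : Multiset ℝ) :
    2 * card s * s.esymm 2 ≤ (card s - 1) * s.sum ^ 2 := by
  nlinarith [sq_sum_eq s, sq_sum_le_card_mul_sum_sq s]

theorem two_mul_esymm_mul_esymm_le_of_card_eq {s : Multiset ℝ} {j : ℕ} (hs : card s = j + 2) :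
    2 * (j + 2) * (s.esymm j * s.esymm (j + 2)) ≤ (j + 1) * s.esymm (j + 1) ^ 2 := by
  obtain ⟨a, r, rfl, hr⟩ := card_eq_succ_iff.1 hs
  obtain ⟨b, r, rfl, rfl⟩ := card_eq_succ_iff.1 hr
  have key := two_mul_card_mul_esymm_two_le (cofactors (a ::ₘ b ::ₘ r))
  rw [esymm_two_cofactors_cons_cons, sum_cofactors_cons, card_cofactors, ← esymm_card] at key
  simp only [card_cons] at key ⊢
  push_cast at key
  linear_combination key

theorem exists_derivative_prod_X_add_C (s : Multiset ℝ) :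
    ∃ t : Multiset ℝ, card t = card s - 1 ∧
      derivative (s.map (X + C ·)).prod = C (card s : ℝ) * (t.map (X + C ·)).prod := by
  set f := (s.map (X + C ·)).prod
  have hf : f = ((s.map Neg.neg).map (X - C ·)).prod := by
    simp [f, map_map, sub_eq_add_neg]
  have hmonic : f.Monic := hf ▸ monic_multiset_prod_of_monic _ _ fun a _ => monic_X_sub_C a
  have hdeg : f.natDegree = card s := by
    rw [hf, natDegree_multiset_prod_X_sub_C_eq_card, card_map]
  have hroots : card f.roots = card s := by
    rw [hf, roots_multiset_prod_X_sub_C, card_map]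
  have hdeg' : (derivative f).natDegree = card s - 1 := by
    have := card_roots_le_derivative f
    have := card_roots' (derivative f)
    have := natDegree_derivative_le f
    omega
  have hroots' : card (derivative f).roots = (derivative f).natDegree := by
    have := card_roots_le_derivative f
    have := card_roots' (derivative f)
    omega
  have hlead : (derivative f).leadingCoeff = card s := by
    rcases eq_zero_or_pos (card s) with hs | hs
    · simp [card_eq_zero.1 hs, f]
    rw [leadingCoeff, hdeg', coeff_derivative, Nat.sub_add_cancel hs, ← hdeg,
      hmonic.coeff_natDegree, hdeg, Nat.cast_sub hs]
    ring
  refine ⟨(derivative f).roots.map Neg.neg, by rw [card_map, hroots', hdeg'], ?_⟩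
  conv_lhs => rw [← C_leadingCoeff_mul_prod_multiset_X_sub_C hroots', hlead]
  simp [map_map, sub_eq_add_neg]

theorem exists_card_mul_esymm_eq (s : Multiset ℝ) :
    ∃ t : Multiset ℝ, card t = card s - 1 ∧
      ∀ j, (card s : ℝ) * t.esymm j = (card s - j) * s.esymm j := by
  obtain ⟨t, ht, hderiv⟩ := exists_derivative_prod_X_add_C s
  refine ⟨t, ht, fun j => ?_⟩
  rcases lt_or_ge j (card s) with hj | hj
  · have := congrArg (coeff · (card s - 1 - j)) hderiv
    simp only [coeff_derivative, coeff_C_mul] at this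
    rw [prod_X_add_C_coeff s (by omega), prod_X_add_C_coeff t (by omega),
      show card s - (card s - 1 - j + 1) = j by omega, ht,
      show card s - 1 - (card s - 1 - j) = j by omega,
      Nat.cast_sub (by omega : j ≤ card s - 1), Nat.cast_sub (by omega : 1 ≤ card s)] at this
    rw [← this]
    ring
  · rcases hj.eq_or_lt with rfl | hj
    · rcases eq_zero_or_pos (card s) with h0 | h0
      · simp [h0]
      · simp [esymm_eq_zero_of_card_lt (s := t) (j := card s) (by omega)]
    · simp [esymm_eq_zero_of_card_lt hj, esymm_eq_zero_of_card_lt (s := t) (by omega : card t < j)]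

noncomputable def esymmMean (s : Multiset ℝ) (j : ℕ) : ℝ := s.esymm j / (card s).choose j

@[simp] theorem esymmMean_zero_right (s : Multiset ℝ) : s.esymmMean 0 = 1 := by
  simp [esymmMean]

theorem esymmMean_eq_zero_of_card_lt {s : Multiset ℝ} {j : ℕ} (h : card s < j) :
    s.esymmMean j = 0 := by
  simp [esymmMean, esymm_eq_zero_of_card_lt h]

theorem esymmMean_pos {s : Multiset ℝ} {j : ℕ} (h : 0 < s.esymm j) : 0 < s.esymmMean j :=
  div_pos h (by exact_mod_cast Nat.choose_pos (le_card_of_esymm_ne_zero h.ne'))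

theorem esymmMean_eq_of_card_mul_esymm_eq {s t : Multiset ℝ} (ht : card t = card s - 1)
    (hst : ∀ j, (card s : ℝ) * t.esymm j = (card s - j) * s.esymm j) {j : ℕ} (hj : j < card s) :
    t.esymmMean j = s.esymmMean j := by
  have hchoose : ((card t).choose j : ℝ) * card s = (card s).choose j * (card s - j) := by
    have := congrArg (Nat.cast : ℕ → ℝ) (Nat.choose_mul_succ_eq (card s - 1) j)
    rw [Nat.sub_add_cancel (by omega), ← ht] at this
    push_cast [Nat.cast_sub hj.le] at this
    exact this
  have hjs : (0 : ℝ) < card s - j := sub_pos.2 (by exact_mod_cast hj)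
  have hC : (0 : ℝ) < (card s).choose j := by exact_mod_cast Nat.choose_pos hj.le
  have hC' : (0 : ℝ) < (card t).choose j := by
    exact_mod_cast Nat.choose_pos (by omega)
  rw [esymmMean, esymmMean, div_eq_div_iff hC'.ne' hC.ne']
  refine mul_left_cancel₀ (mul_pos (hjs.trans_le (sub_le_self _ j.cast_nonneg)) hjs).ne' ?_
  linear_combination ((card s - j) * ((card s).choose j : ℝ)) * hst j -
    ((card s - j) * s.esymm j) * hchoose

theorem esymmMean_mul_esymmMean_le_sq (s : Multiset ℝ) (j : ℕ) :
    s.esymmMean j * s.esymmMean (j + 2) ≤ s.esymmMean (j + 1) ^ 2 := by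
  obtain ⟨m, hm⟩ : ∃ m, card s = m := ⟨_, rfl⟩
  induction m generalizing s with
  | zero =>
    rw [esymmMean_eq_zero_of_card_lt (j := j + 2) (by omega), mul_zero]
    positivity
  | succ m ih =>
    rcases lt_trichotomy (j + 2) (m + 1) with hlt | heq | hgt
    · obtain ⟨t, ht, hst⟩ := exists_card_mul_esymm_eq s
      have hmean (i : ℕ) (hi : i ≤ j + 2) := esymmMean_eq_of_card_mul_esymm_eq ht hst (j := i)
        (by omega)
      rw [← hmean j (by omega), ← hmean (j + 1) (by omega), ← hmean (j + 2) le_rfl]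
      exact ih t (by omega)
    · have htop := two_mul_esymm_mul_esymm_le_of_card_eq (hm.trans heq.symm)
      have hchoose := Nat.choose_succ_right_eq (j + 2) j
      simp only [Nat.choose_succ_self_right, show j + 2 - j = 2 by omega] at hchoose
      have hchoose' : ((j + 2).choose j : ℝ) * 2 = (j + 2) * (j + 1) := by
        exact_mod_cast hchoose.symm
      have hC : (0 : ℝ) < (j + 2).choose j := by exact_mod_cast Nat.choose_pos (by omega)
      rw [← heq] at hm
      simp only [esymmMean, hm, Nat.choose_self, Nat.choose_succ_self_right]
      rw [div_mul_div_comm, div_pow, div_le_div_iff₀ (by positivity) (by positivity)]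
      push_cast
      nlinarith
    · rw [esymmMean_eq_zero_of_card_lt (j := j + 2) (by omega), mul_zero]
      positivity

theorem esymmMean_succ_le_mul {s : Multiset ℝ} {k : ℕ} (h : ∀ j ≤ k, 0 < s.esymm j) :
    s.esymmMean (k + 1) ≤ s.esymmMean 1 * s.esymmMean k := by
  induction k with
  | zero => simp
  | succ k ih =>
    have hk := esymmMean_pos (h k (by omega))
    have hk1 := esymmMean_pos (h (k + 1) le_rfl)
    have ih := ih fun j hj => h j (by omega)
    refine le_of_mul_le_mul_right ?_ hk
    calc s.esymmMean (k + 2) * s.esymmMean k ≤ s.esymmMean (k + 1) ^ 2 := by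
          rw [mul_comm]; exact esymmMean_mul_esymmMean_le_sq s k
      _ ≤ s.esymmMean (k + 1) * (s.esymmMean 1 * s.esymmMean k) := by
          rw [sq]; exact mul_le_mul_of_nonneg_left ih hk1.le
      _ = s.esymmMean 1 * s.esymmMean (k + 1) * s.esymmMean k := by ring

theorem esymmMean_le_pow {s : Multiset ℝ} {k : ℕ} (h : ∀ j < k, 0 < s.esymm j) :
    s.esymmMean k ≤ s.esymmMean 1 ^ k := by
  induction k with
  | zero => simp
  | succ k ih =>
    rcases Nat.eq_zero_or_pos k with rfl | hk
    · simp
    calc s.esymmMean (k + 1) ≤ s.esymmMean 1 * s.esymmMean k :=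
          esymmMean_succ_le_mul fun j hj => h j (by omega)
      _ ≤ s.esymmMean 1 * s.esymmMean 1 ^ k :=
          mul_le_mul_of_nonneg_left (ih fun j hj => h j (by omega))
            (esymmMean_pos (h 1 (by omega))).le
      _ = s.esymmMean 1 ^ (k + 1) := by ring

theorem choose_rpow_neg_mul_esymm_rpow_le {s : Multiset ℝ} {k : ℕ} (hk : k ≠ 0)
    (h : ∀ j ≤ k, 0 < s.esymm j) :
    ((card s).choose k : ℝ) ^ (-(1 / (k : ℝ))) * s.esymm k ^ (1 / (k : ℝ)) ≤
      s.esymm 1 / card s := by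
  have hC : (0 : ℝ) < (card s).choose k :=
    by exact_mod_cast Nat.choose_pos (le_card_of_esymm_ne_zero (h k le_rfl).ne')
  refine Real.rpow_neg_inv_mul_rpow_inv_le hk (h k le_rfl).le hC
    (div_nonneg (h 1 (by omega)).le (Nat.cast_nonneg _)) ?_
  have := esymmMean_le_pow fun j hj => h j hj.le
  rwa [esymmMean, esymmMean, Nat.choose_one_right, div_le_iff₀ hC, mul_comm] at this

theorem succ_mul_card_mul_esymm_succ_le {s : Multiset ℝ} {k : ℕ} (h : ∀ j ≤ k, 0 < s.esymm j) :
    (k + 1) * card s * s.esymm (k + 1) ≤ (card s - k) * s.esymm 1 * s.esymm k := by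
  rcases (le_card_of_esymm_ne_zero (h k le_rfl).ne').eq_or_lt with rfl | hk
  · simp [esymm_eq_zero_of_card_lt (lt_add_one (card s))]
  have hchain := esymmMean_succ_le_mul h
  have hchoose : ((card s).choose (k + 1) : ℝ) * (k + 1) = (card s).choose k * (card s - k) := by
    have := congrArg (Nat.cast : ℕ → ℝ) (Nat.choose_succ_right_eq (card s) k)
    push_cast [Nat.cast_sub hk.le] at this
    exact this
  have hm : (0 : ℝ) < card s := by exact_mod_cast (by omega : 0 < card s)
  have hCk : (0 : ℝ) < (card s).choose k := by exact_mod_cast Nat.choose_pos hk.le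
  have hCk1 : (0 : ℝ) < (card s).choose (k + 1) := by exact_mod_cast Nat.choose_pos hk
  rw [esymmMean, esymmMean, esymmMean, Nat.choose_one_right, div_le_iff₀ hCk1] at hchain
  calc (k + 1) * card s * s.esymm (k + 1)
      ≤ (k + 1) * card s * (s.esymm 1 / card s * (s.esymm k / (card s).choose k) *
          (card s).choose (k + 1)) := by gcongr
    _ = (card s - k) * s.esymm 1 * s.esymm k := by
      field_simp
      linear_combination s.esymm 1 * s.esymm k * hchoose

theorem esymm_mul_esymm_le_sq (s : Multiset ℝ) (j : ℕ) :
    s.esymm j * s.esymm (j + 2) ≤ s.esymm (j + 1) ^ 2 := by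
  rcases lt_or_ge (card s) (j + 2) with h | h
  · rw [esymm_eq_zero_of_card_lt h, mul_zero]
    positivity
  have hN := esymmMean_mul_esymmMean_le_sq s j
  have hC : ((card s).choose j : ℝ) * (card s).choose (j + 2) ≤ (card s).choose (j + 1) ^ 2 := by
    exact_mod_cast Nat.choose_mul_choose_add_two_le_sq (card s) j
  have hC0 : (0 : ℝ) < (card s).choose j := by exact_mod_cast Nat.choose_pos (by omega)
  have hC1 : (0 : ℝ) < (card s).choose (j + 1) := by exact_mod_cast Nat.choose_pos (by omega)
  have hC2 : (0 : ℝ) < (card s).choose (j + 2) := by exact_mod_cast Nat.choose_pos h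
  rw [esymmMean, esymmMean, esymmMean, div_mul_div_comm, div_pow,
    div_le_div_iff₀ (by positivity) (by positivity)] at hN
  refine le_of_mul_le_mul_right ?_ (pow_pos hC1 2)
  nlinarith [mul_le_mul_of_nonneg_left hC (sq_nonneg (s.esymm (j + 1)))]

theorem esymm_pos_of_cons {a : ℝ} {s : Multiset ℝ} {k : ℕ}
    (h : ∀ j ≤ k + 1, 0 < (a ::ₘ s).esymm j) : ∀ j ≤ k, 0 < s.esymm j := by
  induction k with
  | zero => simp
  | succ k ih =>
    have ih := ih fun j hj => h j (by omega)
    intro j hj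
    rcases hj.lt_or_eq with hj | rfl
    · exact ih j (by omega)
    -- if `σ_{k+1}(s) ≤ 0`, positivity of `σ_{k+1}, σ_{k+2}` of `a ::ₘ s` forces
    -- `σ_k σ_{k+2} > σ_{k+1}²` for `s`, against Newton
    by_contra! hk
    have h1 := h (k + 1) (by omega)
    have h2 := h (k + 2) le_rfl
    rw [esymm_cons_succ] at h1 h2
    nlinarith [esymm_mul_esymm_le_sq s k, mul_pos h2 (ih k le_rfl),
      mul_nonneg h1.le (neg_nonneg.2 hk)]

theorem forall_pos_of_esymm_nonneg {s : Multiset ℝ} (hnn : ∀ j, 0 ≤ s.esymm j)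
    (hprod : 0 < s.prod) : ∀ a ∈ s, 0 < a := by
  intro a ha
  by_contra! ha'
  -- `∏ (X + b)` vanishes at `-a ≥ 0`, yet its coefficients are `≥ 0` and its constant term is `> 0`
  have hzero : ((s.map (X + C ·)).prod).eval (-a) = 0 := by
    rw [eval_multiset_prod]
    exact prod_eq_zero (mem_map.2 ⟨_, mem_map_of_mem _ ha, by simp⟩)
  rw [prod_X_add_C_eq_sum_esymm, eval_finsetSum] at hzero
  have : s.prod ≤
      ∑ j ∈ Finset.range (card s + 1), eval (-a) (C (s.esymm j) * X ^ (card s - j)) := by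
    rw [← esymm_card]
    refine le_of_eq_of_le (by simp)
      (Finset.single_le_sum (fun j _ => ?_) (Finset.self_mem_range_succ _))
    simp only [eval_mul, eval_C, eval_pow, eval_X]
    exact mul_nonneg (hnn j) (pow_nonneg (by linarith) _)
  linarith

theorem esymm_pos_of_esymm_nonneg {s : Multiset ℝ} {k : ℕ} (hnn : ∀ j ≤ k, 0 ≤ s.esymm j)
    (hk : 0 < s.esymm k) : ∀ j ≤ k, 0 < s.esymm j := by
  obtain ⟨m, hm⟩ : ∃ m, card s = m := ⟨_, rfl⟩
  induction m using Nat.strong_induction_on generalizing s with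
  | _ m ih =>
    -- at `k = card s` all entries are positive; below, pass to the derivative, which changes
    -- the sign of no `σ_j` with `j < card s`
    rcases (hm ▸ le_card_of_esymm_ne_zero hk.ne').eq_or_lt with rfl | hkm
    · have hpos := forall_pos_of_esymm_nonneg (fun j => ?_) (esymm_card s ▸ hm ▸ hk)
      · exact fun j hj => esymm_pos_of_forall_pos hpos (hm ▸ hj)
      rcases le_or_gt j k with hj | hj
      · exact hnn j hj
      · exact (esymm_eq_zero_of_card_lt (hm ▸ hj)).ge
    obtain ⟨t, ht, hst⟩ := exists_card_mul_esymm_eq s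
    rw [hm] at ht hst
    have hfac (j : ℕ) (hj : j ≤ k) : (0 : ℝ) < m - j :=
      sub_pos.2 (by exact_mod_cast (by omega : j < m))
    have hm0 : (0 : ℝ) < m := by exact_mod_cast (by omega : 0 < m)
    have htpos := ih (m - 1) (by omega) (s := t)
      (fun j hj => nonneg_of_mul_nonneg_right
        ((hst j).symm ▸ mul_nonneg (hfac j hj).le (hnn j hj)) hm0)
      (pos_of_mul_pos_right ((hst k).symm ▸ mul_pos (hfac k le_rfl) hk) hm0.le) ht
    intro j hj
    exact pos_of_mul_pos_right ((hst j) ▸ mul_pos hm0 (htpos j hj)) (hfac j hj).le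

theorem neg_card_sub_mul_esymm_one_le_mul_of_mem {s : Multiset ℝ} {k : ℕ} (hk : 1 ≤ k)
    (h : ∀ j ≤ k, 0 < s.esymm j) {a : ℝ} (ha : a ∈ s) :
    -((card s - k) * s.esymm 1) ≤ a * (card s * (k - 1)) := by
  obtain ⟨k, rfl⟩ := Nat.exists_eq_add_of_le' hk
  obtain ⟨y, rfl⟩ := exists_cons_of_mem ha
  have hy := esymm_pos_of_cons h
  have hchain := succ_mul_card_mul_esymm_succ_le hy
  have hk1 := h (k + 1) le_rfl
  rw [esymm_cons_succ] at hk1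
  rw [show 1 = 0 + 1 from rfl, esymm_cons_succ]
  simp only [card_cons, esymm_zero_right] at hchain ⊢
  push_cast
  have hE := hy k le_rfl
  have hm : (0 : ℝ) ≤ card y := Nat.cast_nonneg _
  nlinarith [mul_nonneg (mul_nonneg (by positivity : (0:ℝ) ≤ k + 1) hm) hk1.le]

end Multiset

theorem sigmaElem_eq_esymm (n j : ℕ) (x : Fin n → ℝ) :
    sigmaElem n j x = (Finset.univ.val.map x).esymm j :=
  (Finset.esymm_map_val x Finset.univ j).symm

theorem continuous_sigmaElem (n j : ℕ) : Continuous (sigmaElem n j) := by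
  unfold sigmaElem
  fun_prop

theorem sigmaElem_one (n : ℕ) (x : Fin n → ℝ) : sigmaElem n 1 x = ∑ i, x i := by
  simp [sigmaElem_eq_esymm, Finset.sum]

theorem sigmaElem_const_one (n j : ℕ) : sigmaElem n j (fun _ => 1) = n.choose j := by
  simp [sigmaElem]

theorem gammaPlus_subset_sigmaElem_pos (n k : ℕ) :
    GammaPlus n k ⊆ {x | ∀ j ≤ k, 0 < sigmaElem n j x} := by
  set G := {x : Fin n → ℝ | ∀ j ≤ k, 0 < sigmaElem n j x}
  have hG : IsOpen G := by
    have : G = ⋂ j ∈ Set.Iic k, {x | 0 < sigmaElem n j x} := by ext; simp [G]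
    rw [this]
    exact (Set.finite_Iic k).isOpen_biInter fun j _ =>
      isOpen_lt continuous_const (continuous_sigmaElem n j)
  have hclosure (j : ℕ) (hj : j ≤ k) : closure G ⊆ {x | 0 ≤ sigmaElem n j x} :=
    closure_minimal (fun x hx => (hx j hj).le)
      (isClosed_le continuous_const (continuous_sigmaElem n j))
  intro x hx
  have hone := connectedComponentIn_nonempty_iff.1 ⟨x, hx⟩
  have hkn : k ≤ n := by
    by_contra! hkn
    simp [sigmaElem_const_one, Nat.choose_eq_zero_of_lt hkn] at hone
  refine isPreconnected_connectedComponentIn.subset_left_of_subset_union hG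
    isClosed_closure.isOpen_compl (disjoint_compl_right.mono_left subset_closure) (fun y hy => ?_)
    ⟨_, mem_connectedComponentIn hone, fun j hj => ?_⟩ hx
  · by_cases hyG : y ∈ closure G
    · left
      have hyk : 0 < sigmaElem n k y := connectedComponentIn_subset _ (fun _ => 1) hy
      have hnn (j : ℕ) (hj : j ≤ k) : 0 ≤ sigmaElem n j y := hclosure j hj hyG
      simp only [G, Set.mem_ofPred_eq, sigmaElem_eq_esymm] at hyk hnn ⊢
      exact Multiset.esymm_pos_of_esymm_nonneg hnn hyk
    · exact Or.inr hyG
  · rw [sigmaElem_const_one]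
    exact_mod_cast Nat.choose_pos (hj.trans hkn)

theorem le_add_sigmaElem_one_div_of_sigmaElem_pos {n k : ℕ} (hn : 3 ≤ n) (hk : 2 ≤ k)
    (h2k : n ≤ 2 * k) {x : Fin n → ℝ} (hx : ∀ j ≤ k, 0 < sigmaElem n j x) (i : Fin n) :
    (2 * (k : ℝ) - n) * ((n : ℝ) - 1) / (((n : ℝ) - 2) * ((k : ℝ) - 1)) *
        ((n.choose k : ℝ) ^ (-(1 / (k : ℝ)))) * (sigmaElem n k x) ^ (1 / (k : ℝ)) ≤
      x i + sigmaElem n 1 x / ((n : ℝ) - 2) := by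
  obtain ⟨s, hsx⟩ : ∃ s, s = Finset.univ.val.map x := ⟨_, rfl⟩
  have hs : Multiset.card s = n := by simp [hsx]
  simp only [sigmaElem_eq_esymm, ← hsx] at hx ⊢
  have hmaclaurin := Multiset.choose_rpow_neg_mul_esymm_rpow_le (by omega) hx
  have hxi := Multiset.neg_card_sub_mul_esymm_one_le_mul_of_mem (by omega) hx
    (hsx ▸ Multiset.mem_map_of_mem x (Finset.mem_univ_val i))
  rw [hs] at hmaclaurin hxi
  have hnR : (3 : ℝ) ≤ n := by exact_mod_cast hn
  have hkR : (2 : ℝ) ≤ k := by exact_mod_cast hk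
  have h2kR : (n : ℝ) ≤ 2 * k := by exact_mod_cast h2k
  have hc : 0 ≤ (2 * (k : ℝ) - n) * ((n : ℝ) - 1) / (((n : ℝ) - 2) * ((k : ℝ) - 1)) :=
    div_nonneg (mul_nonneg (by linarith) (by linarith)) (mul_nonneg (by linarith) (by linarith))
  rw [mul_assoc]
  refine (mul_le_mul_of_nonneg_left hmaclaurin hc).trans (sub_nonneg.1 ?_)
  have hgap : x i + s.esymm 1 / ((n : ℝ) - 2) -
      (2 * (k : ℝ) - n) * ((n : ℝ) - 1) / (((n : ℝ) - 2) * ((k : ℝ) - 1)) * (s.esymm 1 / n) =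
      (x i * (n * (k - 1)) + (n - k) * s.esymm 1) / (n * (k - 1)) := by
    have : (n : ℝ) - 2 ≠ 0 := by linarith
    have : (k : ℝ) - 1 ≠ 0 := by linarith
    have : (n : ℝ) ≠ 0 := by linarith
    field_simp
    ring
  rw [hgap]
  exact div_nonneg (by linarith) (by nlinarith)

theorem ALam_add_sigmaElem_one_div {n : ℕ} (hn : 3 ≤ n) (Λ : Fin n → ℝ) (i : Fin n) :
    ALam n Λ i + sigmaElem n 1 (ALam n Λ) / ((n : ℝ) - 2) = Λ i := by
  have hnR : (3 : ℝ) ≤ n := by exact_mod_cast hn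
  have hn1 : (n : ℝ) - 1 ≠ 0 := by linarith
  have hn2 : (n : ℝ) - 2 ≠ 0 := by linarith
  simp only [sigmaElem_one, ALam, Finset.sum_sub_distrib, Finset.sum_const, Finset.card_univ,
    Fintype.card_fin, nsmul_eq_mul]
  field_simp
  ring

theorem min_ge_sigma_k_pow_general (n k : ℕ) (hn : 3 ≤ n) (hk : 2 ≤ k)
    (h2k : n ≤ 2 * k) (Λ : Fin n → ℝ)
    (h : ALam n Λ ∈ closure (GammaPlus n k)) :
    ∀ i, (2 * (k : ℝ) - n) * ((n : ℝ) - 1) / (((n : ℝ) - 2) * ((k : ℝ) - 1)) *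
        ((n.choose k : ℝ) ^ (-(1 / (k : ℝ)))) *
        (sigmaElem n k (ALam n Λ)) ^ (1 / (k : ℝ)) ≤ Λ i := by
  intro i
  have hclosed : IsClosed {x : Fin n → ℝ |
      (2 * (k : ℝ) - n) * ((n : ℝ) - 1) / (((n : ℝ) - 2) * ((k : ℝ) - 1)) *
        ((n.choose k : ℝ) ^ (-(1 / (k : ℝ)))) * (sigmaElem n k x) ^ (1 / (k : ℝ)) ≤
      x i + sigmaElem n 1 x / ((n : ℝ) - 2)} :=
    isClosed_le
      (continuous_const.mul ((Real.continuous_rpow_const (by positivity)).comp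
        (continuous_sigmaElem n k)))
      ((continuous_apply i).add ((continuous_sigmaElem n 1).div_const _))
  have hbound := hclosed.closure_subset_iff.2 (fun x hx =>
    le_add_sigmaElem_one_div_of_sigmaElem_pos hn hk h2k (gammaPlus_subset_sigmaElem_pos n k hx) i) h
  rwa [Set.mem_ofPred_eq, ALam_add_sigmaElem_one_div hn] at hbound

/-- Lemma 1, second part: if `A_Λ ∈ Γ̄_k^+` with `n/2 ≤ k ≤ n`, then
`min_i λ_i ≥ ((2k−n)(n−1)/((n−2)(k−1))) · C(n,k)^{−1/k} · σ_k(A_Λ)^{1/k}`. -/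
theorem min_ge_sigma_k_pow (n k : ℕ) (hn : 3 ≤ n) (hk : 2 ≤ k) (hkn : k ≤ n)
    (h2k : n ≤ 2 * k) (Λ : Fin n → ℝ)
    (h : ALam n Λ ∈ closure (GammaPlus n k)) :
    ∀ i, (2 * (k : ℝ) - n) * ((n : ℝ) - 1) / (((n : ℝ) - 2) * ((k : ℝ) - 1)) *
        ((n.choose k : ℝ) ^ (-(1 / (k : ℝ)))) *
        (sigmaElem n k (ALam n Λ)) ^ (1 / (k : ℝ)) ≤ Λ i :=
  min_ge_sigma_k_pow_general n k hn hk h2k Λ h
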